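/- For k ≥ 0, the number of all-positive sets that are admissible pinnacle sets of the hyperoctahedral group B_{2k+1} but are not admissible pinnacle sets of the symmetric group S_{2k+1} equals 4^k − C(2k, k). -/

import Mathlib

/-- The pinnacle set of a word `w : Fin n → ℤ`: values `w i` (for `0 < i < n-1`)
strictly larger than both neighbors. -/
def PinSet (n : ℕ) (w : Fin n → ℤ) : Set ℤ :=
  {x | ∃ (i : ℕ) (h0 : 0 < i) (h2 : i + 1 < n),
    w ⟨i, by omega⟩ = x ∧ w ⟨i - 1, by omega⟩ < w ⟨i, by omega⟩ ∧
      w ⟨i + 1, h2⟩ < w ⟨i, by omega⟩}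

/-- `w : Fin n → ℤ` is the one-line notation of a signed permutation of rank `n`:
the absolute values of its entries are distinct elements of `{1,...,n}`
(hence a bijection onto `{1,...,n}`). -/
def IsSignedPerm (n : ℕ) (w : Fin n → ℤ) : Prop :=
  (∀ i, 1 ≤ |w i| ∧ |w i| ≤ (n : ℤ)) ∧ Function.Injective fun i => |w i|

/-- `S` is an admissible pinnacle set of the hyperoctahedral group `B_n`. -/
def APSB (n : ℕ) (S : Finset ℤ) : Prop :=
  ∃ w : Fin n → ℤ, IsSignedPerm n w ∧ PinSet n w = ↑S

/-- `S` is an admissible pinnacle set of the type `D` group `D_n`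
(signed permutations with an even number of negative one-line entries). -/
def APSD (n : ℕ) (S : Finset ℤ) : Prop :=
  ∃ w : Fin n → ℤ, IsSignedPerm n w ∧
    Even (Finset.univ.filter fun i => w i < 0).card ∧ PinSet n w = ↑S

/-- `S` is an admissible pinnacle set of the symmetric group `S_n`
(an unsigned permutation is a signed permutation with all entries positive). -/
def APSA (n : ℕ) (S : Finset ℤ) : Prop :=
  ∃ w : Fin n → ℤ, IsSignedPerm n w ∧ (∀ i, 0 < w i) ∧ PinSet n w = ↑S

/-- `T` is an admissible pinnacle set of the totally ordered finite set `X ⊆ ℤ`: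
it is the pinnacle set of some arrangement of the elements of `X`. -/
def APSOn (X : Finset ℤ) (T : Finset ℤ) : Prop :=
  ∃ w : Fin X.card → ℤ, Function.Injective w ∧ (∀ i, w i ∈ X) ∧
    PinSet X.card w = ↑T

open Finset

/-!
A positive set `S` is a pinnacle set of a signed permutation of rank `n = 2k + 1` iff
`S ⊆ [1, n]` and `#S ≤ k`: pinnacles sit at pairwise non-adjacent interior positions, and
conversely the elements of `S` become exactly the pinnacles once they are interleaved with the
negatives of the remaining values. It is a pinnacle set of an unsigned permutation iff moreover
`2 #{x ∈ S | x ≤ s} < s` for every `s ∈ S`: the pinnacles up to `s`, their right neighbours and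
the left neighbour of the leftmost one are distinct values in `[1, s]`; conversely `S` interleaved
increasingly with its complement works. The first family has `∑_{i ≤ k} C(2k+1, i) = 4^k`
members. The second condition says that the lattice path stepping down at the elements of `S`
and up elsewhere stays positive, and these paths are counted by `C(2k, k)`.
-/

/-- Read `a, a + 1, …` as the steps of a lattice path started at height `h`, going down at the
elements of `S` and up elsewhere: the path never drops below `0`. -/
def IsBallot (a h : ℤ) (S : Finset ℤ) : Prop :=
  ∀ s ∈ S, 2 * (#{x ∈ S | x ≤ s} : ℤ) ≤ s - a + 1 + h

instance (a h : ℤ) : DecidablePred (IsBallot a h) := fun _ => Finset.decidableDforallFinset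

lemma isBallot_add_one (a h : ℤ) : IsBallot (a + 1) (h + 1) = IsBallot a h := by
  ext S
  refine forall₂_congr fun s _ => ?_
  rw [show s - (a + 1) + 1 + (h + 1) = s - a + 1 + h by ring]

lemma isBallot_insert {a h : ℤ} {S : Finset ℤ} (hS : ∀ x ∈ S, a < x) :
    IsBallot a h (insert a S) ↔ 1 ≤ h ∧ IsBallot (a + 1) (h - 1) S := by
  have haS : a ∉ S := fun ha => (hS a ha).false
  have rank_a : #{x ∈ insert a S | x ≤ a} = 1 := by
    rw [filter_insert, if_pos le_rfl, filter_false_of_mem fun x hx => (hS x hx).not_ge]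
    rfl
  have rank_s : ∀ s ∈ S, #{x ∈ insert a S | x ≤ s} = #{x ∈ S | x ≤ s} + 1 := fun s hs => by
    rw [filter_insert, if_pos (hS s hs).le, card_insert_of_notMem (by simp [haS])]
  unfold IsBallot
  simp only [forall_mem_insert, rank_a]
  refine and_congr (by omega) (forall₂_congr fun s hs => ?_)
  rw [rank_s s hs]
  omega

noncomputable def ballotSets (a h : ℤ) (m : ℕ) : Finset (Finset ℤ) :=
  {S ∈ (Ico a (a + m)).powerset | IsBallot a h S}

lemma card_ballotSets_zero (a h : ℤ) : #(ballotSets a h 0) = 1 := by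
  simp [ballotSets, IsBallot, filter_singleton]

lemma card_ballotSets_succ (a h : ℤ) (m : ℕ) :
    #(ballotSets a h (m + 1)) =
      #(ballotSets (a + 1) (h + 1) m) + if 1 ≤ h then #(ballotSets (a + 1) (h - 1) m) else 0 := by
  have hIco : Ico a (a + ↑(m + 1)) = insert a (Ico (a + 1) (a + 1 + m)) := by
    ext x; simp only [mem_Ico, mem_insert]; push_cast; omega
  have ha : a ∉ Ico (a + 1) (a + 1 + m) := by simp
  simp only [ballotSets, card_filter, hIco, sum_powerset_insert ha, isBallot_add_one]
  have hlt : ∀ S ∈ (Ico (a + 1) (a + 1 + m)).powerset, ∀ x ∈ S, a < x :=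
    fun S hS x hx => (mem_Ico.1 (mem_powerset.1 hS hx)).1
  congr 1
  split_ifs with h1
  · exact sum_congr rfl fun S hS =>
      if_congr (by rw [isBallot_insert (hlt S hS), and_iff_right h1]) rfl rfl
  · exact sum_eq_zero fun S hS => if_neg (by rw [isBallot_insert (hlt S hS)]; tauto)

lemma sum_range_choose_succ (m u : ℕ) :
    ∑ j ∈ range u, (m + 1).choose j =
      ∑ j ∈ range u, m.choose j + ∑ j ∈ range (u - 1), m.choose j := by
  rcases u with _ | u
  · simp
  · rw [sum_range_succ', sum_range_succ' (fun j => m.choose j), Nat.add_sub_cancel]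
    simp only [Nat.choose_succ_succ', sum_add_distrib, Nat.choose_zero_right]
    ring

/-- The reflection principle, stated additively to avoid truncated subtraction. -/
lemma card_ballotSets_add_sum_range (m : ℕ) (a : ℤ) (h u : ℕ) (hu : m + h = 2 * u) :
    #(ballotSets a h m) + ∑ j ∈ range (u - h), m.choose j = ∑ j ∈ range (u + 1), m.choose j := by
  induction m generalizing a h u with
  | zero => simp [card_ballotSets_zero, sum_range_succ', show u - h = 0 by omega]
  | succ m ih =>
    simp only [card_ballotSets_succ, sum_range_choose_succ, Nat.add_sub_cancel]
    rcases h with _ | h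
    · have := ih (a + 1) 1 u (by omega)
      simp only [Nat.cast_zero, zero_add, Nat.cast_one, Nat.sub_zero] at this ⊢
      rw [if_neg (by norm_num)]
      omega
    · have ih_up := ih (a + 1) (h + 2) u (by omega)
      have ih_down := ih (a + 1) h (u - 1) (by omega)
      rw [show u - 1 - h = u - (h + 1) by omega, Nat.sub_add_cancel (by omega)] at ih_down
      rw [show u - (h + 1) - 1 = u - (h + 2) by omega, if_pos (by omega)]
      push_cast at ih_up ⊢
      rw [show (h : ℤ) + 1 + 1 = h + 2 by ring, add_sub_cancel_right]
      omega

lemma mem_ballotSets_one {h : ℤ} {n : ℕ} {S : Finset ℤ} :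
    S ∈ ballotSets 1 h n ↔ S ⊆ Icc 1 (n : ℤ) ∧ IsBallot 1 h S := by
  rw [ballotSets, mem_filter, mem_powerset,
    show Ico 1 (1 + (n : ℤ)) = Icc 1 (n : ℤ) by ext; simp only [mem_Ico, mem_Icc]; omega]

lemma card_ballotSets_neg_one (k : ℕ) : #(ballotSets 1 (-1) (2 * k + 1)) = (2 * k).choose k := by
  have := card_ballotSets_add_sum_range (2 * k) 2 0 k (by ring)
  rw [card_ballotSets_succ, if_neg (by norm_num)]
  rw [sum_range_succ, Nat.sub_zero] at this
  norm_num at this ⊢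
  omega

def IsPinnacleAt (f : ℕ → ℤ) (n i : ℕ) : Prop :=
  0 < i ∧ i + 1 < n ∧ f (i - 1) < f i ∧ f (i + 1) < f i

instance (f : ℕ → ℤ) (n : ℕ) : DecidablePred (IsPinnacleAt f n) :=
  fun _ => inferInstanceAs (Decidable (_ ∧ _))

lemma exists_eq_comp_val {n : ℕ} (w : Fin n → ℤ) : ∃ f : ℕ → ℤ, w = fun j : Fin n => f j :=
  ⟨fun i => if h : i < n then w ⟨i, h⟩ else 0, by simp⟩

lemma pinSet_eq_image (n : ℕ) (f : ℕ → ℤ) :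
    PinSet n (fun j => f j) = f '' {i | IsPinnacleAt f n i} := by
  ext x
  simp only [PinSet, IsPinnacleAt, Set.mem_ofPred_eq, Set.mem_image]
  constructor
  · rintro ⟨i, hi, hin, rfl, hl, hr⟩
    exact ⟨i, ⟨hi, hin, hl, hr⟩, rfl⟩
  · rintro ⟨i, ⟨hi, hin, hl, hr⟩, rfl⟩
    exact ⟨i, hi, hin, rfl, hl, hr⟩

lemma mem_iff_of_pinSet_eq {n : ℕ} {f : ℕ → ℤ} {S : Finset ℤ}
    (h : PinSet n (fun j => f j) = S) {x : ℤ} : x ∈ S ↔ ∃ i, IsPinnacleAt f n i ∧ f i = x := by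
  rw [← mem_coe, ← h, pinSet_eq_image]
  rfl

/-- Take for `N` the positions in `P`, their right neighbours and the left neighbour of the
leftmost one: pinnacle positions are never adjacent. -/
lemma exists_cover_of_isPinnacleAt {f : ℕ → ℤ} {n : ℕ} {P : Finset ℕ}
    (hP : ∀ i ∈ P, IsPinnacleAt f n i) (hne : P.Nonempty) :
    ∃ N : Finset ℕ, #N = 2 * #P + 1 ∧ N ⊆ range n ∧ ∀ j ∈ N, ∃ i ∈ P, f j ≤ f i := by
  set i₀ := P.min' hne
  have hi₀ : i₀ ∈ P := P.min'_mem hne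
  have hdisj : Disjoint P (P.image (· + 1)) := by
    refine disjoint_left.2 fun i hi hi' => ?_
    obtain ⟨j, hj, rfl⟩ := mem_image.1 hi'
    have := (hP _ hi).2.2.1
    have := (hP j hj).2.2.2
    simp only [Nat.add_sub_cancel] at *
    omega
  have hleft : i₀ - 1 ∉ P ∪ P.image (· + 1) := by
    have := (hP i₀ hi₀).1
    simp only [mem_union, mem_image, not_or, not_exists, not_and]
    exact ⟨fun h => by have := P.min'_le _ h; omega,
      fun j hj _ => by have := P.min'_le _ hj; omega⟩
  refine ⟨insert (i₀ - 1) (P ∪ P.image (· + 1)), ?_, ?_, ?_⟩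
  · rw [card_insert_of_notMem hleft, card_union_of_disjoint hdisj,
      card_image_of_injective _ (add_left_injective 1)]
    ring
  · intro j hj
    have := fun i hi => (hP i hi).2.1
    simp only [mem_insert, mem_union, mem_image, mem_range] at hj ⊢
    rcases hj with rfl | hj | ⟨i, hi, rfl⟩ <;> grind
  · intro j hj
    simp only [mem_insert, mem_union, mem_image] at hj
    rcases hj with rfl | hj | ⟨i, hi, rfl⟩
    · exact ⟨i₀, hi₀, (hP i₀ hi₀).2.2.1.le⟩
    · exact ⟨j, hj, le_rfl⟩
    · exact ⟨i, hi, (hP i hi).2.2.2.le⟩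

lemma two_mul_card_le_of_apsb {n : ℕ} {S : Finset ℤ} (h : APSB n S) : 2 * #S ≤ n - 1 := by
  obtain ⟨w, -, hw⟩ := h
  obtain ⟨f, rfl⟩ := exists_eq_comp_val w
  set P := (range n).filter (IsPinnacleAt f n)
  have hSP : S ⊆ P.image f := fun x hx => by
    obtain ⟨i, hi, rfl⟩ := (mem_iff_of_pinSet_eq hw).1 hx
    exact mem_image_of_mem f (mem_filter.2 ⟨mem_range.2 (by have := hi.2.1; omega), hi⟩)
  have hcard : #S ≤ #P := (card_le_card hSP).trans card_image_le
  rcases P.eq_empty_or_nonempty with hP | hP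
  · rw [hP, card_empty] at hcard
    omega
  obtain ⟨N, hN, hNn, -⟩ :=
    exists_cover_of_isPinnacleAt (P := P) (fun i hi => (mem_filter.1 hi).2) hP
  have := card_le_card hNn
  rw [card_range] at this
  omega

lemma subset_Icc_of_apsb {n : ℕ} {S : Finset ℤ} (hpos : ∀ x ∈ S, 0 < x) (h : APSB n S) :
    S ⊆ Icc 1 (n : ℤ) := by
  obtain ⟨w, hw, hpin⟩ := h
  obtain ⟨f, rfl⟩ := exists_eq_comp_val w
  intro x hx
  obtain ⟨i, hi, rfl⟩ := (mem_iff_of_pinSet_eq hpin).1 hx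
  have hbound : |f i| ≤ n := (hw.1 ⟨i, by have := hi.2.1; omega⟩).2
  exact mem_Icc.2 ⟨hpos _ hx, (le_abs_self _).trans hbound⟩

lemma isBallot_of_apsa {n : ℕ} {S : Finset ℤ} (h : APSA n S) : IsBallot 1 (-1) S := by
  obtain ⟨w, hw, hpos, hpin⟩ := h
  obtain ⟨f, rfl⟩ := exists_eq_comp_val w
  have hf : ∀ i < n, 0 < f i := fun i hi => hpos ⟨i, hi⟩
  have hinj : Set.InjOn f (range n) := fun i hi j hj hij => by
    have := @hw.2 ⟨i, mem_range.1 hi⟩ ⟨j, mem_range.1 hj⟩ (by simp only [hij])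
    simpa using this
  intro s hs
  set P := {i ∈ range n | IsPinnacleAt f n i ∧ f i ≤ s}
  obtain ⟨i, hi, rfl⟩ := (mem_iff_of_pinSet_eq hpin).1 hs
  have hiP : i ∈ P := mem_filter.2 ⟨mem_range.2 (by have := hi.2.1; omega), hi, le_rfl⟩
  have hrank : #{x ∈ S | x ≤ f i} ≤ #P := by
    refine (card_le_card (t := P.image f) fun x hx => ?_).trans card_image_le
    obtain ⟨hxS, hxs⟩ := mem_filter.1 hx
    obtain ⟨j, hj, rfl⟩ := (mem_iff_of_pinSet_eq hpin).1 hxS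
    exact mem_image_of_mem f (mem_filter.2 ⟨mem_range.2 (by have := hj.2.1; omega), hj, hxs⟩)
  obtain ⟨N, hN, hNn, hNle⟩ :=
    exists_cover_of_isPinnacleAt (fun j hj => (mem_filter.1 hj).2.1) ⟨i, hiP⟩
  have hNs : N.image f ⊆ Icc 1 (f i) := fun x hx => by
    obtain ⟨j, hj, rfl⟩ := mem_image.1 hx
    obtain ⟨l, hl, hjl⟩ := hNle j hj
    have := hf j (mem_range.1 (hNn hj))
    have := (mem_filter.1 hl).2.2
    exact mem_Icc.2 ⟨by omega, by omega⟩
  have := card_le_card hNs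
  rw [card_image_of_injOn (hinj.mono (coe_subset.2 hNn)), Int.card_Icc, hN] at this
  omega

/-- The `i`-th smallest element of `S`, counting from `0`; it is the junk value `0` when
`#S ≤ i`. -/
noncomputable def nthElem (S : Finset ℤ) (i : ℕ) : ℤ :=
  if h : i < #S then S.orderEmbOfFin rfl ⟨i, h⟩ else 0

section nthElem

variable {S : Finset ℤ}

lemma nthElem_mem {i : ℕ} (h : i < #S) : nthElem S i ∈ S := by
  rw [nthElem, dif_pos h]
  exact S.orderEmbOfFin_mem rfl _

lemma nthElem_nonneg (hS : ∀ x ∈ S, 0 ≤ x) (i : ℕ) : 0 ≤ nthElem S i := by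
  by_cases h : i < #S
  · exact hS _ (nthElem_mem h)
  · rw [nthElem, dif_neg h]

lemma nthElem_strictMonoOn (S : Finset ℤ) : StrictMonoOn (nthElem S) (Set.Iio #S) :=
  fun i hi j hj hij => by
    rw [nthElem, nthElem, dif_pos (show i < #S from hi), dif_pos (show j < #S from hj)]
    exact (S.orderEmbOfFin rfl).strictMono (Fin.mk_lt_mk.2 hij)

lemma exists_nthElem_eq {x : ℤ} (hx : x ∈ S) : ∃ i < #S, nthElem S i = x := by
  rw [← mem_coe, ← range_orderEmbOfFin S rfl] at hx
  obtain ⟨⟨i, hi⟩, rfl⟩ := hx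
  exact ⟨i, hi, dif_pos hi⟩

lemma card_filter_lt_le {r : ℕ} {y : ℤ} (h : r < #S → y ≤ nthElem S r) :
    #{x ∈ S | x < y} ≤ r := by
  refine (card_le_card (t := (range r).image (nthElem S)) fun x hx => ?_).trans
    (card_image_le.trans (card_range r).le)
  obtain ⟨hxS, hxy⟩ := mem_filter.1 hx
  obtain ⟨i, hi, rfl⟩ := exists_nthElem_eq hxS
  refine mem_image_of_mem _ (mem_range.2 (not_le.1 fun hri => ?_))
  have := (nthElem_strictMonoOn S).monotoneOn (lt_of_le_of_lt hri hi) hi hri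
  linarith [h (lt_of_le_of_lt hri hi)]

lemma le_card_filter_le_nthElem {i : ℕ} (h : i < #S) :
    i + 1 ≤ #{x ∈ S | x ≤ nthElem S i} := by
  have hinj : Set.InjOn (nthElem S) (range (i + 1)) :=
    (nthElem_strictMonoOn S).injOn.mono fun j hj => by simp at hj ⊢; omega
  rw [← card_range (i + 1), ← card_image_of_injOn hinj]
  refine card_le_card fun x hx => ?_
  obtain ⟨j, hj, rfl⟩ := mem_image.1 hx
  have hj : j < i + 1 := mem_range.1 hj
  exact mem_filter.2 ⟨nthElem_mem (by omega),
    (nthElem_strictMonoOn S).monotoneOn (by simp; omega) (by simpa using h) (by omega)⟩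

end nthElem

lemma two_mul_card_le_of_isBallot {n : ℕ} {S : Finset ℤ} (hS : S ⊆ Icc 1 (n : ℤ))
    (hb : IsBallot 1 (-1) S) : 2 * #S ≤ n - 1 := by
  rcases S.eq_empty_or_nonempty with rfl | hne
  · simp
  have := hb _ (S.max'_mem hne)
  rw [filter_true_of_mem fun x hx => S.le_max' x hx] at this
  have := mem_Icc.1 (hS (S.max'_mem hne))
  omega

/-- With `s` the `i`-th element of `S`, the interval `[1, s)` has at least `2i + 2` elements by
the ballot condition, only `i` of which lie in `S`. -/
lemma nthElem_sdiff_succ_lt {n : ℕ} {S : Finset ℤ} (hS : S ⊆ Icc 1 (n : ℤ))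
    (hb : IsBallot 1 (-1) S) {i : ℕ} (hi : i < #S) :
    nthElem (Icc 1 (n : ℤ) \ S) (i + 1) < nthElem S i := by
  have hballot := hb _ (nthElem_mem hi)
  have hrank := le_card_filter_le_nthElem hi
  set T := Icc 1 (n : ℤ) \ S
  set s := nthElem S i
  by_contra! hst
  have hbelowS : #{x ∈ S | x < s} ≤ i := card_filter_lt_le fun _ => le_rfl
  have hbelowT : #{x ∈ T | x < s} ≤ i + 1 := card_filter_lt_le fun _ => hst
  have hcover : Icc 1 (s - 1) ⊆ {x ∈ S | x < s} ∪ {x ∈ T | x < s} := fun y hy => by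
    have := mem_Icc.1 (hS (nthElem_mem hi))
    have := mem_Icc.1 hy
    by_cases hyS : y ∈ S
    · exact mem_union_left _ (mem_filter.2 ⟨hyS, by omega⟩)
    · exact mem_union_right _ (mem_filter.2 ⟨mem_sdiff.2 ⟨mem_Icc.2 ⟨by omega, by omega⟩, hyS⟩,
        by omega⟩)
  have := (card_le_card hcover).trans (card_union_le _ _)
  rw [Int.card_Icc] at this
  omega

lemma isPinnacleAt_iff_of_zigzag {f : ℕ → ℤ} {n d : ℕ} (hd : 2 * d ≤ n - 1)
    (hup : ∀ i < d, f (2 * i) < f (2 * i + 1)) (hdown : ∀ i < d, f (2 * i + 2) < f (2 * i + 1))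
    (htail : StrictMonoOn f (Set.Ico (2 * d) n) ∨ StrictAntiOn f (Set.Ico (2 * d) n)) (j : ℕ) :
    IsPinnacleAt f n j ↔ j < 2 * d ∧ j % 2 = 1 := by
  constructor
  · rintro ⟨hj, hjn, hl, hr⟩
    have hjd : j ≤ 2 * d := by
      by_contra! hjd
      have hmem : ∀ l, 2 * d ≤ l → l < n → l ∈ Set.Ico (2 * d) n := fun l h1 h2 => ⟨h1, h2⟩
      rcases htail with hmono | hanti
      · exact (hmono (hmem j (by omega) (by omega)) (hmem (j + 1) (by omega) hjn)
          (by omega)).not_gt hr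
      · exact (hanti (hmem (j - 1) (by omega) (by omega)) (hmem j (by omega) (by omega))
          (by omega)).not_gt hl
    obtain ⟨i, rfl | rfl⟩ := Nat.even_or_odd' j
    · rcases (by omega : i < d ∨ i = d) with hid | rfl
      · exact (lt_asymm (hup i hid) hr).elim
      · have := hdown (i - 1) (by omega)
        rw [show 2 * (i - 1) + 2 = 2 * i by omega, show 2 * (i - 1) + 1 = 2 * i - 1 by omega]
          at this
        exact (lt_asymm this hl).elim
    · exact ⟨by omega, by omega⟩
  · rintro ⟨hjd, hodd⟩
    obtain ⟨i, rfl⟩ : ∃ i, j = 2 * i + 1 := ⟨j / 2, by omega⟩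
    exact ⟨by omega, by omega, by simpa using hup i (by omega), hdown i (by omega)⟩

/-- With `s` and `t` the increasing enumerations of `S` and of `[1, n] \ S`, and `d = #S`, the word
`ε t₀, s₀, ε t₁, s₁, …, ε t_{d-1}, s_{d-1}, ε t_d, ε t_{d+1}, …, ε t_{n-d-1}`. -/
noncomputable def zigzag (n : ℕ) (S : Finset ℤ) (ε : ℤ) (j : ℕ) : ℤ :=
  if j < 2 * #S ∧ j % 2 = 1 then nthElem S (j / 2)
  else ε * nthElem (Icc 1 (n : ℤ) \ S) (if j < 2 * #S then j / 2 else j - #S)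

section zigzag

variable {n : ℕ} {S : Finset ℤ} {ε : ℤ}

lemma zigzag_odd {i : ℕ} (hi : i < #S) : zigzag n S ε (2 * i + 1) = nthElem S i := by
  rw [zigzag, if_pos (by omega)]
  congr 1
  omega

lemma zigzag_even {i : ℕ} (hi : i ≤ #S) :
    zigzag n S ε (2 * i) = ε * nthElem (Icc 1 (n : ℤ) \ S) i := by
  rw [zigzag, if_neg (by omega)]
  congr 2
  split_ifs <;> omega

lemma zigzag_of_le {j : ℕ} (hj : 2 * #S ≤ j) :
    zigzag n S ε j = ε * nthElem (Icc 1 (n : ℤ) \ S) (j - #S) := by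
  rw [zigzag, if_neg (by omega), if_neg (by omega)]

lemma card_Icc_sdiff_of_subset (hS : S ⊆ Icc 1 (n : ℤ)) : #(Icc 1 (n : ℤ) \ S) = n - #S := by
  rw [card_sdiff_of_subset hS, Int.card_Icc]
  omega

lemma abs_zigzag (hS : S ⊆ Icc 1 (n : ℤ)) (hε : |ε| = 1) (j : ℕ) :
    |zigzag n S ε j| = zigzag n S 1 j := by
  have hpos : ∀ T ⊆ Icc 1 (n : ℤ), ∀ i, |nthElem T i| = nthElem T i := fun T hT i =>
    abs_of_nonneg (nthElem_nonneg (fun x hx => by linarith [(mem_Icc.1 (hT hx)).1]) i)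
  unfold zigzag
  split_ifs
  · exact hpos S hS _
  all_goals rw [abs_mul, hε, one_mul, hpos _ sdiff_subset, one_mul]

lemma zigzag_one_mem (hS : S ⊆ Icc 1 (n : ℤ)) (hd : 2 * #S ≤ n - 1) {j : ℕ} (hj : j < n) :
    zigzag n S 1 j ∈ Icc 1 (n : ℤ) := by
  have hT := card_Icc_sdiff_of_subset hS
  unfold zigzag
  split_ifs with h h'
  · exact hS (nthElem_mem (by omega))
  all_goals rw [one_mul]; exact sdiff_subset (nthElem_mem (by omega))

lemma zigzag_one_injOn (hS : S ⊆ Icc 1 (n : ℤ)) (hd : 2 * #S ≤ n - 1) :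
    Set.InjOn (zigzag n S 1) (range n) := by
  intro j₁ hj₁ j₂ hj₂ h
  have hj₁ : j₁ < n := mem_range.1 hj₁
  have hj₂ : j₂ < n := mem_range.1 hj₂
  have hT := card_Icc_sdiff_of_subset hS
  have hST : ∀ a b, a < #S → b < #(Icc 1 (n : ℤ) \ S) →
      nthElem S a ≠ nthElem (Icc 1 (n : ℤ) \ S) b := fun a b ha hb h =>
    (mem_sdiff.1 (nthElem_mem hb)).2 (h ▸ nthElem_mem ha)
  unfold zigzag at h
  simp only [one_mul] at h
  split_ifs at h
  all_goals first
    | exact absurd h (hST _ _ (by omega) (by omega))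
    | exact absurd h.symm (hST _ _ (by omega) (by omega))
    | have := (nthElem_strictMonoOn _).injOn (by simp only [Set.mem_Iio]; omega)
        (by simp only [Set.mem_Iio]; omega) h
      omega

lemma isSignedPerm_zigzag (hS : S ⊆ Icc 1 (n : ℤ)) (hd : 2 * #S ≤ n - 1) (hε : |ε| = 1) :
    IsSignedPerm n (fun j : Fin n => zigzag n S ε j) := by
  refine ⟨fun j => ?_, fun j₁ j₂ h => Fin.ext ?_⟩
  · rw [abs_zigzag hS hε]
    exact mem_Icc.1 (zigzag_one_mem hS hd j.2)
  · simp only [abs_zigzag hS hε] at h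
    exact zigzag_one_injOn hS hd (mem_range.2 j₁.2) (mem_range.2 j₂.2) h

lemma zigzag_tail (hS : S ⊆ Icc 1 (n : ℤ)) (hε : ε = -1 ∨ ε = 1) :
    StrictMonoOn (zigzag n S ε) (Set.Ico (2 * #S) n) ∨
      StrictAntiOn (zigzag n S ε) (Set.Ico (2 * #S) n) := by
  have hT := card_Icc_sdiff_of_subset hS
  have key : ∀ j₁ ∈ Set.Ico (2 * #S) n, ∀ j₂ ∈ Set.Ico (2 * #S) n, j₁ < j₂ →
      nthElem (Icc 1 (n : ℤ) \ S) (j₁ - #S) < nthElem (Icc 1 (n : ℤ) \ S) (j₂ - #S) :=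
    fun j₁ ⟨h₁, _⟩ j₂ ⟨_, h₂⟩ h => nthElem_strictMonoOn _ (Set.mem_Iio.2 (by omega))
      (Set.mem_Iio.2 (by omega)) (by omega)
  rcases hε with rfl | rfl
  · refine Or.inr fun j₁ h₁ j₂ h₂ h => ?_
    rw [zigzag_of_le h₁.1, zigzag_of_le h₂.1]
    linarith [key j₁ h₁ j₂ h₂ h]
  · refine Or.inl fun j₁ h₁ j₂ h₂ h => ?_
    rw [zigzag_of_le h₁.1, zigzag_of_le h₂.1]
    linarith [key j₁ h₁ j₂ h₂ h]

lemma pinSet_zigzag (hS : S ⊆ Icc 1 (n : ℤ)) (hd : 2 * #S ≤ n - 1)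
    (hε : ε = -1 ∨ ε = 1 ∧ ∀ i < #S, nthElem (Icc 1 (n : ℤ) \ S) (i + 1) < nthElem S i) :
    PinSet n (fun j : Fin n => zigzag n S ε j) = S := by
  have hT := card_Icc_sdiff_of_subset hS
  set T := Icc 1 (n : ℤ) \ S
  have hs : ∀ i < #S, 1 ≤ nthElem S i := fun i hi => (mem_Icc.1 (hS (nthElem_mem hi))).1
  have ht : ∀ i, 0 ≤ nthElem T i :=
    nthElem_nonneg fun x hx => by linarith [(mem_Icc.1 (sdiff_subset hx)).1]
  have htmono : ∀ a b, a < b → b < #T → nthElem T a < nthElem T b := fun a b hab hb =>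
    nthElem_strictMonoOn T (Set.mem_Iio.2 (hab.trans hb)) (Set.mem_Iio.2 hb) hab
  have hup : ∀ i < #S, zigzag n S ε (2 * i) < zigzag n S ε (2 * i + 1) := fun i hi => by
    rw [zigzag_even hi.le, zigzag_odd hi]
    rcases hε with rfl | ⟨rfl, hlt⟩
    · linarith [hs i hi, ht i]
    · rw [one_mul]
      exact (htmono i (i + 1) (by omega) (by omega)).trans (hlt i hi)
  have hdown : ∀ i < #S, zigzag n S ε (2 * i + 2) < zigzag n S ε (2 * i + 1) := fun i hi => by
    rw [show 2 * i + 2 = 2 * (i + 1) by ring, zigzag_even (by omega), zigzag_odd hi]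
    rcases hε with rfl | ⟨rfl, hlt⟩
    · linarith [hs i hi, ht (i + 1)]
    · rw [one_mul]
      exact hlt i hi
  ext x
  have htail := zigzag_tail (ε := ε) hS (hε.imp id And.left)
  simp only [pinSet_eq_image, isPinnacleAt_iff_of_zigzag hd hup hdown htail, mem_coe,
    Set.mem_image, Set.mem_ofPred_eq]
  constructor
  · rintro ⟨j, ⟨hj, hodd⟩, rfl⟩
    obtain ⟨i, rfl⟩ : ∃ i, j = 2 * i + 1 := ⟨j / 2, by omega⟩
    rw [zigzag_odd (by omega)]
    exact nthElem_mem (by omega)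
  · intro hx
    obtain ⟨i, hi, rfl⟩ := exists_nthElem_eq hx
    exact ⟨2 * i + 1, ⟨by omega, by omega⟩, zigzag_odd hi⟩

end zigzag

lemma apsb_of_two_mul_card_le {n : ℕ} {S : Finset ℤ} (hS : S ⊆ Icc 1 (n : ℤ))
    (hd : 2 * #S ≤ n - 1) : APSB n S :=
  ⟨_, isSignedPerm_zigzag (ε := -1) hS hd (by norm_num), pinSet_zigzag hS hd (Or.inl rfl)⟩

lemma apsa_of_isBallot {n : ℕ} {S : Finset ℤ} (hS : S ⊆ Icc 1 (n : ℤ))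
    (hb : IsBallot 1 (-1) S) : APSA n S := by
  have hd := two_mul_card_le_of_isBallot hS hb
  refine ⟨_, isSignedPerm_zigzag hS hd abs_one, fun j => ?_,
    pinSet_zigzag hS hd (Or.inr ⟨rfl, fun i hi => nthElem_sdiff_succ_lt hS hb hi⟩)⟩
  exact Int.one_pos.trans_le (mem_Icc.1 (zigzag_one_mem hS hd j.2)).1

lemma card_filter_powerset_card_le {s : Finset ℤ} {k : ℕ} (hs : #s = 2 * k + 1) :
    #{t ∈ s.powerset | #t ≤ k} = 4 ^ k := by
  rw [card_eq_sum_card_fiberwise (f := card) (t := range (k + 1))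
    fun t ht => mem_range.2 (Nat.lt_succ_of_le (mem_filter.1 ht).2)]
  rw [← Nat.sum_range_choose_halfway k, ← hs]
  refine sum_congr rfl fun i hi => ?_
  rw [filter_filter, ← card_powersetCard]
  congr 1
  rw [powersetCard_eq_filter]
  exact filter_congr fun t _ => by simp at hi; omega

theorem stmt18 (k : ℕ) :
    {S : Finset ℤ | (∀ x ∈ S, 0 < x) ∧ APSB (2 * k + 1) S ∧ ¬ APSA (2 * k + 1) S}.ncard
      = 4 ^ k - Nat.choose (2 * k) k := by
  set n := 2 * k + 1
  set A := {S ∈ (Icc 1 (n : ℤ)).powerset | #S ≤ k}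
  have hset : {S : Finset ℤ | (∀ x ∈ S, 0 < x) ∧ APSB n S ∧ ¬ APSA n S} =
      ↑(A \ ballotSets 1 (-1) n) := by
    ext S
    rw [Set.mem_ofPred_eq, mem_coe, mem_sdiff, mem_filter, mem_powerset, mem_ballotSets_one]
    constructor
    · rintro ⟨hpos, hB, hA⟩
      have hS := subset_Icc_of_apsb hpos hB
      exact ⟨⟨hS, by have := two_mul_card_le_of_apsb hB; omega⟩,
        fun hb => hA (apsa_of_isBallot hS hb.2)⟩
    · rintro ⟨⟨hS, hk⟩, hA⟩
      exact ⟨fun x hx => (mem_Icc.1 (hS hx)).1, apsb_of_two_mul_card_le hS (by omega),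
        fun h => hA ⟨hS, isBallot_of_apsa h⟩⟩
  have hballot : ballotSets 1 (-1) n ⊆ A := fun S hS => by
    obtain ⟨hS, hb⟩ := mem_ballotSets_one.1 hS
    have := two_mul_card_le_of_isBallot hS hb
    exact mem_filter.2 ⟨mem_powerset.2 hS, by omega⟩
  rw [hset, Set.ncard_coe_finset, card_sdiff_of_subset hballot,
    card_filter_powerset_card_le (by rw [Int.card_Icc]; omega), card_ballotSets_neg_one]
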